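/- Let $L_1, L_2, L_3 > 0$ and let $k_1, k_2, k_3$ be nonzero real numbers with $-k_1/k_2 \ne L_1/L_2$ (equivalently $k_1 L_2 + k_2 L_1 \ne 0$). Then for every tuple of continuous functions $f_j : [0,L_j] \to \mathbb{R}$ ($j = 1,2,3$) there exists a unique tuple of twice continuously differentiable functions $\psi_j : [0,L_j] \to \mathbb{R}$ satisfying: $-k_j \psi_j'' = f_j$ on $[0,L_j]$ for $j=1,2,3$; $\psi_3(0) = 0$; $\psi_1(0) = \psi_2(0)$; $k_1 \psi_1'(0) + k_2 \psi_2'(0) = 0$; $\psi_1(L_1) = \psi_2(L_2) = \psi_3(L_3)$; and $k_1 \psi_1'(L_1) + k_2 \psi_2'(L_2) + k_3 \psi_3'(L_3) = 0$. -/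

import Mathlib

/-!
On an edge, `-k ψ'' = f` is solved by `a + b x` plus a double primitive of `-f / k`, so existence
reduces to a linear system for the constants `a, b`, whose determinant is a nonzero multiple of
`k₂ L₁ + k₁ L₂`. For uniqueness, the difference of two solutions solves the homogeneous problem and
is therefore affine on every edge; the two flux conditions kill the slope on the tail, continuity
around the loop then gives `β₁ (k₂ L₁ + k₁ L₂) = 0` for the slope `β₁` on the first loop edge, and
the Dirichlet condition finally kills the constants.
-/

/-- Classical solution of the general three-edge tadpole network problem: the loop
consists of edges `1` and `2` of lengths `L₁, L₂` joined at a vertex (coordinate `0` of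
both) and at the internal vertex (coordinate `L j`), the tail edge `3` of length `L₃`
joins the internal vertex (its coordinate `L₃`) to the external Dirichlet vertex
(coordinate `0`). -/
def IsThreeTadpoleSolutionVar (L₁ L₂ L₃ k₁ k₂ k₃ : ℝ) (f₁ f₂ f₃ : ℝ → ℝ)
    (ψ₁ ψ₂ ψ₃ : ℝ → ℝ) : Prop :=
  ContDiffOn ℝ 2 ψ₁ (Set.Icc 0 L₁) ∧ ContDiffOn ℝ 2 ψ₂ (Set.Icc 0 L₂) ∧
  ContDiffOn ℝ 2 ψ₃ (Set.Icc 0 L₃) ∧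
  (∀ x ∈ Set.Icc (0 : ℝ) L₁, -(k₁ * iteratedDerivWithin 2 ψ₁ (Set.Icc 0 L₁) x) = f₁ x) ∧
  (∀ x ∈ Set.Icc (0 : ℝ) L₂, -(k₂ * iteratedDerivWithin 2 ψ₂ (Set.Icc 0 L₂) x) = f₂ x) ∧
  (∀ x ∈ Set.Icc (0 : ℝ) L₃, -(k₃ * iteratedDerivWithin 2 ψ₃ (Set.Icc 0 L₃) x) = f₃ x) ∧
  ψ₃ 0 = 0 ∧
  ψ₁ 0 = ψ₂ 0 ∧
  k₁ * derivWithin ψ₁ (Set.Icc 0 L₁) 0 + k₂ * derivWithin ψ₂ (Set.Icc 0 L₂) 0 = 0 ∧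
  ψ₁ L₁ = ψ₂ L₂ ∧ ψ₂ L₂ = ψ₃ L₃ ∧
  k₁ * derivWithin ψ₁ (Set.Icc 0 L₁) L₁ + k₂ * derivWithin ψ₂ (Set.Icc 0 L₂) L₂
    + k₃ * derivWithin ψ₃ (Set.Icc 0 L₃) L₃ = 0

open Set

noncomputable def primitive (g : ℝ → ℝ) (x : ℝ) : ℝ := ∫ t in (0 : ℝ)..x, g t

@[simp]
lemma primitive_zero (g : ℝ → ℝ) : primitive g 0 = 0 := intervalIntegral.integral_same

lemma hasDerivAt_primitive {g : ℝ → ℝ} (hg : Continuous g) (x : ℝ) :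
    HasDerivAt (primitive g) (g x) x :=
  intervalIntegral.integral_hasDerivAt_right (hg.intervalIntegrable 0 x)
    (hg.stronglyMeasurableAtFilter _ _) hg.continuousAt

lemma contDiff_succ_primitive {g : ℝ → ℝ} {n : ℕ} (hg : ContDiff ℝ n g) :
    ContDiff ℝ (n + 1) (primitive g) := by
  have hderiv : deriv (primitive g) = g :=
    funext fun x => (hasDerivAt_primitive hg.continuous x).deriv
  refine contDiff_succ_iff_deriv.2 ⟨fun x => ?_, by simp, by rwa [hderiv]⟩
  exact (hasDerivAt_primitive hg.continuous x).differentiableAt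

lemma iteratedDerivWithin_two_apply (f : ℝ → ℝ) (s : Set ℝ) (x : ℝ) :
    iteratedDerivWithin 2 f s x = derivWithin (derivWithin f s) s x := by
  rw [iteratedDerivWithin_eq_iterate]; rfl

noncomputable def secondPrimitive (h : ℝ → ℝ) (a b x : ℝ) : ℝ :=
  a + b * x + primitive (primitive h) x

section secondPrimitive

variable {h : ℝ → ℝ}

@[simp]
lemma secondPrimitive_zero (h : ℝ → ℝ) (a b : ℝ) : secondPrimitive h a b 0 = a := by
  simp [secondPrimitive]

lemma hasDerivAt_secondPrimitive (hh : Continuous h) (a b x : ℝ) :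
    HasDerivAt (secondPrimitive h a b) (b + primitive h x) x := by
  have hlin : HasDerivAt (fun x => a + b * x) b x := by
    simpa using ((hasDerivAt_id x).const_mul b).const_add a
  exact hlin.add
    (hasDerivAt_primitive (contDiff_succ_primitive (contDiff_zero.2 hh)).continuous x)

lemma contDiff_secondPrimitive (hh : Continuous h) (a b : ℝ) :
    ContDiff ℝ 2 (secondPrimitive h a b) :=
  (contDiff_const.add (contDiff_const.mul contDiff_id)).add
    (contDiff_succ_primitive (contDiff_succ_primitive (contDiff_zero.2 hh)))

lemma derivWithin_secondPrimitive (hh : Continuous h) (a b : ℝ) {s : Set ℝ} {x : ℝ}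
    (hs : UniqueDiffWithinAt ℝ s x) :
    derivWithin (secondPrimitive h a b) s x = b + primitive h x :=
  (hasDerivAt_secondPrimitive hh a b x).hasDerivWithinAt.derivWithin hs

lemma iteratedDerivWithin_two_secondPrimitive (hh : Continuous h) (a b : ℝ) {s : Set ℝ}
    (hs : UniqueDiffOn ℝ s) {x : ℝ} (hx : x ∈ s) :
    iteratedDerivWithin 2 (secondPrimitive h a b) s x = h x := by
  rw [iteratedDerivWithin_two_apply, derivWithin_congr
    (fun y hy => derivWithin_secondPrimitive hh a b (hs y hy))
    (derivWithin_secondPrimitive hh a b (hs x hx))]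
  exact ((hasDerivAt_primitive hh x).const_add b).hasDerivWithinAt.derivWithin (hs x hx)

end secondPrimitive

lemma eq_affine_of_iteratedDerivWithin_two_eq_zero {a b : ℝ} (hab : a < b) {u : ℝ → ℝ}
    (hu : ContDiffOn ℝ 2 u (Icc a b))
    (hu'' : ∀ x ∈ Icc a b, iteratedDerivWithin 2 u (Icc a b) x = 0) (x : ℝ) (hx : x ∈ Icc a b) :
    derivWithin u (Icc a b) x = derivWithin u (Icc a b) a ∧
      u x = u a + derivWithin u (Icc a b) a * (x - a) := by
  have hs := uniqueDiffOn_Icc hab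
  set c := derivWithin u (Icc a b) a
  have hu' : ∀ y ∈ Icc a b, derivWithin u (Icc a b) y = c :=
    constant_of_derivWithin_zero
      ((hu.derivWithin hs (m := 1) le_rfl).differentiableOn one_ne_zero)
      fun y hy => by rw [← iteratedDerivWithin_two_apply]; exact hu'' y (Ico_subset_Icc_self hy)
  have hline (y : ℝ) : HasDerivAt (fun y => u a + c * (y - a)) c y := by
    simpa using (((hasDerivAt_id y).sub_const a).const_mul c).const_add (u a)
  refine ⟨hu' x hx, eq_of_derivWithin_eq (hu.differentiableOn two_ne_zero)
    (fun y _ => (hline y).differentiableAt.differentiableWithinAt) (fun y hy => ?_) (by simp) x hx⟩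
  rw [hu' y (Ico_subset_Icc_self hy),
    (hline y).hasDerivWithinAt.derivWithin (hs y (Ico_subset_Icc_self hy))]

lemma exists_continuous_eqOn_Icc {a b : ℝ} (hab : a ≤ b) {f : ℝ → ℝ}
    (hf : ContinuousOn f (Icc a b)) : ∃ g : ℝ → ℝ, Continuous g ∧ EqOn g f (Icc a b) :=
  ⟨IccExtend hab ((Icc a b).domRestrict f), hf.domRestrict.Icc_extend',
    fun x hx => by rw [IccExtend_of_mem hab _ hx]; rfl⟩

section Tadpole

variable {L₁ L₂ L₃ k₁ k₂ k₃ : ℝ}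

lemma IsThreeTadpoleSolutionVar.sub (hL₁ : 0 < L₁) (hL₂ : 0 < L₂) (hL₃ : 0 < L₃)
    {f₁ f₂ f₃ φ₁ φ₂ φ₃ ψ₁ ψ₂ ψ₃ : ℝ → ℝ}
    (hφ : IsThreeTadpoleSolutionVar L₁ L₂ L₃ k₁ k₂ k₃ f₁ f₂ f₃ φ₁ φ₂ φ₃)
    (hψ : IsThreeTadpoleSolutionVar L₁ L₂ L₃ k₁ k₂ k₃ f₁ f₂ f₃ ψ₁ ψ₂ ψ₃) :
    IsThreeTadpoleSolutionVar L₁ L₂ L₃ k₁ k₂ k₃ 0 0 0 (φ₁ - ψ₁) (φ₂ - ψ₂) (φ₃ - ψ₃) := by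
  obtain ⟨cφ₁, cφ₂, cφ₃, eφ₁, eφ₂, eφ₃, φ₃0, φ₁₂0, nφ0, φ₁₂L, φ₂₃L, nφL⟩ := hφ
  obtain ⟨cψ₁, cψ₂, cψ₃, eψ₁, eψ₂, eψ₃, ψ₃0, ψ₁₂0, nψ0, ψ₁₂L, ψ₂₃L, nψL⟩ := hψ
  have ode {L k : ℝ} (hL : 0 < L) {f u v : ℝ → ℝ} (hu : ContDiffOn ℝ 2 u (Icc 0 L))
      (hv : ContDiffOn ℝ 2 v (Icc 0 L))
      (eu : ∀ x ∈ Icc 0 L, -(k * iteratedDerivWithin 2 u (Icc 0 L) x) = f x)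
      (ev : ∀ x ∈ Icc 0 L, -(k * iteratedDerivWithin 2 v (Icc 0 L) x) = f x) :
      ∀ x ∈ Icc 0 L, -(k * iteratedDerivWithin 2 (u - v) (Icc 0 L) x) = (0 : ℝ → ℝ) x :=
    fun x hx => by
      rw [iteratedDerivWithin_sub hx (uniqueDiffOn_Icc hL) (hu x hx) (hv x hx), Pi.zero_apply]
      linear_combination eu x hx - ev x hx
  have slope {L : ℝ} {u v : ℝ → ℝ} (hu : ContDiffOn ℝ 2 u (Icc 0 L))
      (hv : ContDiffOn ℝ 2 v (Icc 0 L)) {x : ℝ} (hx : x ∈ Icc 0 L) :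
      derivWithin (u - v) (Icc 0 L) x = derivWithin u (Icc 0 L) x - derivWithin v (Icc 0 L) x :=
    derivWithin_sub (hu.differentiableOn two_ne_zero x hx) (hv.differentiableOn two_ne_zero x hx)
  refine ⟨cφ₁.sub cψ₁, cφ₂.sub cψ₂, cφ₃.sub cψ₃, ode hL₁ cφ₁ cψ₁ eφ₁ eψ₁,
    ode hL₂ cφ₂ cψ₂ eφ₂ eψ₂, ode hL₃ cφ₃ cψ₃ eφ₃ eψ₃, ?_, ?_, ?_, ?_, ?_, ?_⟩
  · simp [φ₃0, ψ₃0]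
  · simp [φ₁₂0, ψ₁₂0]
  · rw [slope cφ₁ cψ₁ (left_mem_Icc.2 hL₁.le), slope cφ₂ cψ₂ (left_mem_Icc.2 hL₂.le)]
    linear_combination nφ0 - nψ0
  · simp [φ₁₂L, ψ₁₂L]
  · simp [φ₂₃L, ψ₂₃L]
  · rw [slope cφ₁ cψ₁ (right_mem_Icc.2 hL₁.le), slope cφ₂ cψ₂ (right_mem_Icc.2 hL₂.le),
      slope cφ₃ cψ₃ (right_mem_Icc.2 hL₃.le)]
    linear_combination nφL - nψL

lemma IsThreeTadpoleSolutionVar.eqOn_zero (hL₁ : 0 < L₁) (hL₂ : 0 < L₂) (hL₃ : 0 < L₃)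
    (hk₁ : k₁ ≠ 0) (hk₂ : k₂ ≠ 0) (hk₃ : k₃ ≠ 0) (hΔ : k₂ * L₁ + k₁ * L₂ ≠ 0)
    {u₁ u₂ u₃ : ℝ → ℝ} (hu : IsThreeTadpoleSolutionVar L₁ L₂ L₃ k₁ k₂ k₃ 0 0 0 u₁ u₂ u₃) :
    EqOn u₁ 0 (Icc 0 L₁) ∧ EqOn u₂ 0 (Icc 0 L₂) ∧ EqOn u₃ 0 (Icc 0 L₃) := by
  obtain ⟨c₁, c₂, c₃, e₁, e₂, e₃, v₃0, v₁₂0, n0, v₁₂L, v₂₃L, nL⟩ := hu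
  have affine {L k : ℝ} (hL : 0 < L) (hk : k ≠ 0) {u : ℝ → ℝ} (hu : ContDiffOn ℝ 2 u (Icc 0 L))
      (e : ∀ x ∈ Icc 0 L, -(k * iteratedDerivWithin 2 u (Icc 0 L) x) = (0 : ℝ → ℝ) x)
      (x : ℝ) (hx : x ∈ Icc 0 L) :
      derivWithin u (Icc 0 L) x = derivWithin u (Icc 0 L) 0 ∧
        u x = u 0 + derivWithin u (Icc 0 L) 0 * x := by
    simpa using eq_affine_of_iteratedDerivWithin_two_eq_zero hL hu
      (fun y hy => by simpa [hk] using e y hy) x hx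
  have a₁ := affine hL₁ hk₁ c₁ e₁
  have a₂ := affine hL₂ hk₂ c₂ e₂
  have a₃ := affine hL₃ hk₃ c₃ e₃
  set β₁ := derivWithin u₁ (Icc 0 L₁) 0
  set β₂ := derivWithin u₂ (Icc 0 L₂) 0
  set β₃ := derivWithin u₃ (Icc 0 L₃) 0
  obtain ⟨d₁, w₁⟩ := a₁ L₁ (right_mem_Icc.2 hL₁.le)
  obtain ⟨d₂, w₂⟩ := a₂ L₂ (right_mem_Icc.2 hL₂.le)
  obtain ⟨d₃, w₃⟩ := a₃ L₃ (right_mem_Icc.2 hL₃.le)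
  rw [d₁, d₂, d₃] at nL
  rw [w₁, w₂] at v₁₂L
  rw [w₂, w₃] at v₂₃L
  have hβ₃ : β₃ = 0 := by
    have : k₃ * β₃ = 0 := by linear_combination nL - n0
    simpa [hk₃] using this
  have hβ₁ : β₁ = 0 := by
    -- `β₁ (k₂ L₁ + k₁ L₂) = k₂ (β₁ L₁ - β₂ L₂) + L₂ (k₁ β₁ + k₂ β₂)`
    have : β₁ * (k₂ * L₁ + k₁ * L₂) = 0 := by
      linear_combination k₂ * v₁₂L + L₂ * n0 - k₂ * v₁₂0
    simpa [hΔ] using this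
  have hβ₂ : β₂ = 0 := by
    have : k₂ * β₂ = 0 := by linear_combination n0 - k₁ * hβ₁
    simpa [hk₂] using this
  have hα₂ : u₂ 0 = 0 := by linear_combination v₂₃L + v₃0 + L₃ * hβ₃ - L₂ * hβ₂
  refine ⟨fun x hx => ?_, fun x hx => ?_, fun x hx => ?_⟩
  · simp [(a₁ x hx).2, hβ₁, v₁₂0, hα₂]
  · simp [(a₂ x hx).2, hβ₂, hα₂]
  · simp [(a₃ x hx).2, hβ₃, v₃0]

lemma exists_isThreeTadpoleSolutionVar (hL₁ : 0 < L₁) (hL₂ : 0 < L₂) (hL₃ : 0 < L₃)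
    (hk₁ : k₁ ≠ 0) (hk₂ : k₂ ≠ 0) (hk₃ : k₃ ≠ 0) (hΔ : k₂ * L₁ + k₁ * L₂ ≠ 0)
    {f₁ f₂ f₃ : ℝ → ℝ} (hf₁ : ContinuousOn f₁ (Icc 0 L₁)) (hf₂ : ContinuousOn f₂ (Icc 0 L₂))
    (hf₃ : ContinuousOn f₃ (Icc 0 L₃)) :
    ∃ ψ₁ ψ₂ ψ₃ : ℝ → ℝ, IsThreeTadpoleSolutionVar L₁ L₂ L₃ k₁ k₂ k₃ f₁ f₂ f₃ ψ₁ ψ₂ ψ₃ := by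
  have edge {L k : ℝ} (hL : 0 < L) (hk : k ≠ 0) {f : ℝ → ℝ} (hf : ContinuousOn f (Icc 0 L)) :
      ∃ h : ℝ → ℝ, Continuous h ∧ ∀ a b, ∀ x ∈ Icc 0 L,
        -(k * iteratedDerivWithin 2 (secondPrimitive h a b) (Icc 0 L) x) = f x := by
    obtain ⟨g, hg, hgf⟩ := exists_continuous_eqOn_Icc hL.le hf
    have hh : Continuous fun y => -(g y / k) := (hg.div_const k).neg
    refine ⟨_, hh, fun a b x hx => ?_⟩
    rw [iteratedDerivWithin_two_secondPrimitive hh a b (uniqueDiffOn_Icc hL) hx, hgf hx]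
    field_simp
  have slope {L : ℝ} (hL : 0 < L) {h : ℝ → ℝ} (hh : Continuous h) (a b : ℝ) {x : ℝ}
      (hx : x ∈ Icc 0 L) : derivWithin (secondPrimitive h a b) (Icc 0 L) x = b + primitive h x :=
    derivWithin_secondPrimitive hh a b (uniqueDiffOn_Icc hL x hx)
  obtain ⟨h₁, hh₁, e₁⟩ := edge hL₁ hk₁ hf₁
  obtain ⟨h₂, hh₂, e₂⟩ := edge hL₂ hk₂ hf₂
  obtain ⟨h₃, hh₃, e₃⟩ := edge hL₃ hk₃ hf₃
  -- Loop slopes `k₂ c, -k₁ c` satisfy the flux condition at `0`; `c` makes the loop continuous.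
  set c := (primitive (primitive h₂) L₂ - primitive (primitive h₁) L₁) / (k₂ * L₁ + k₁ * L₂)
  set b₃ := -(k₁ * primitive h₁ L₁ + k₂ * primitive h₂ L₂ + k₃ * primitive h₃ L₃) / k₃
  set a := b₃ * L₃ + primitive (primitive h₃) L₃ + k₁ * c * L₂ - primitive (primitive h₂) L₂
  refine ⟨secondPrimitive h₁ a (k₂ * c), secondPrimitive h₂ a (-(k₁ * c)),
    secondPrimitive h₃ 0 b₃, (contDiff_secondPrimitive hh₁ _ _).contDiffOn,
    (contDiff_secondPrimitive hh₂ _ _).contDiffOn, (contDiff_secondPrimitive hh₃ _ _).contDiffOn,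
    e₁ _ _, e₂ _ _, e₃ _ _, by simp, by simp, ?_, ?_, ?_, ?_⟩
  · rw [slope hL₁ hh₁ _ _ (left_mem_Icc.2 hL₁.le), slope hL₂ hh₂ _ _ (left_mem_Icc.2 hL₂.le)]
    simp only [primitive_zero]
    ring
  · simp only [secondPrimitive, c]
    field_simp
    ring
  · simp only [secondPrimitive, a]
    ring
  · rw [slope hL₁ hh₁ _ _ (right_mem_Icc.2 hL₁.le), slope hL₂ hh₂ _ _ (right_mem_Icc.2 hL₂.le),
      slope hL₃ hh₃ _ _ (right_mem_Icc.2 hL₃.le)]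
    simp only [b₃]
    field_simp
    ring

end Tadpole

/-- Well-posedness for a general three-phase tadpole network (Corollary 4.3): the
problem is well-posed provided `-k₁/k₂ ≠ L₁/L₂`. -/
theorem stmt_11 (L₁ L₂ L₃ : ℝ) (hL₁ : 0 < L₁) (hL₂ : 0 < L₂) (hL₃ : 0 < L₃)
    (k₁ k₂ k₃ : ℝ) (hk₁ : k₁ ≠ 0) (hk₂ : k₂ ≠ 0) (hk₃ : k₃ ≠ 0)
    (hres : -(k₁ / k₂) ≠ L₁ / L₂)
    (f₁ f₂ f₃ : ℝ → ℝ)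
    (hf₁ : ContinuousOn f₁ (Set.Icc 0 L₁)) (hf₂ : ContinuousOn f₂ (Set.Icc 0 L₂))
    (hf₃ : ContinuousOn f₃ (Set.Icc 0 L₃)) :
    ∃ ψ₁ ψ₂ ψ₃ : ℝ → ℝ, IsThreeTadpoleSolutionVar L₁ L₂ L₃ k₁ k₂ k₃ f₁ f₂ f₃ ψ₁ ψ₂ ψ₃ ∧
      ∀ φ₁ φ₂ φ₃ : ℝ → ℝ, IsThreeTadpoleSolutionVar L₁ L₂ L₃ k₁ k₂ k₃ f₁ f₂ f₃ φ₁ φ₂ φ₃ →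
        (∀ x ∈ Set.Icc (0 : ℝ) L₁, φ₁ x = ψ₁ x) ∧
        (∀ x ∈ Set.Icc (0 : ℝ) L₂, φ₂ x = ψ₂ x) ∧
        (∀ x ∈ Set.Icc (0 : ℝ) L₃, φ₃ x = ψ₃ x) := by
  have hΔ : k₂ * L₁ + k₁ * L₂ ≠ 0 := by
    contrapose! hres
    field_simp
    linarith
  obtain ⟨ψ₁, ψ₂, ψ₃, hψ⟩ :=
    exists_isThreeTadpoleSolutionVar hL₁ hL₂ hL₃ hk₁ hk₂ hk₃ hΔ hf₁ hf₂ hf₃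
  refine ⟨ψ₁, ψ₂, ψ₃, hψ, fun φ₁ φ₂ φ₃ hφ => ?_⟩
  obtain ⟨h₁, h₂, h₃⟩ := (hφ.sub hL₁ hL₂ hL₃ hψ).eqOn_zero hL₁ hL₂ hL₃ hk₁ hk₂ hk₃ hΔ
  exact ⟨fun x hx => sub_eq_zero.1 (h₁ hx), fun x hx => sub_eq_zero.1 (h₂ hx),
    fun x hx => sub_eq_zero.1 (h₃ hx)⟩
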